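/- Let p ≥ 0. Suppose H_0,…,H_{p-1} are nowhere zero, H_p is identically zero, a is nowhere zero, and ϑ ∈ 𝔊 is nowhere zero and satisfies T_j(ϑ) = ϑ/a. Define the ℝ-linear operator R on 𝔊 by R = ((1/H_0)·)∘(T_i − b·)∘((1/H_1)·)∘(T_i − T_j(b)·)∘···∘((1/H_{p-1})·)∘(T_i − T_j^{p-1}(b)·)∘(μ·), where μ = T_i^{-1}(H_{p-1})·T_i^{-2}(H_{p-2})···T_i^{-p}(H_0)/T_i^{-(p+1)}(ϑ); for p = 0, R is multiplication by 1/T_i^{-1}(ϑ). Then for every f ∈ 𝔊 with T_j(f) = f one has L(R(f)) = 0; i.e. R maps ker(T_j − 1) into the space of symmetries ker L (R is an i-symmetry driver). -/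
import Mathlib


/-!
Discrete (quad-graph) setting: the space `𝔊` is modelled by `QG = ℤ → ℤ → ℝ`
(functions `φ(i,j)`), with the shifts `Ti`, `Tj`, their inverses, and the
`k`-fold shifts `TiZ k`, `TjZ k`.  For `g : QG`, pointwise multiplication
`g * φ` models the operator `g·`.
-/

/-- The function space `𝔊` of functions `ℤ² → ℝ`. -/
abbrev QG : Type := ℤ → ℤ → ℝ

namespace QG

noncomputable section

/-- The shift operator `T_i(φ)(i,j) = φ(i+1,j)`. -/
def Ti (φ : QG) : QG := fun i j => φ (i + 1) j

/-- The shift operator `T_j(φ)(i,j) = φ(i,j+1)`. -/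
def Tj (φ : QG) : QG := fun i j => φ i (j + 1)

/-- The `k`-fold shift in `i`. -/
def TiZ (k : ℤ) (φ : QG) : QG := fun i j => φ (i + k) j

/-- The `k`-fold shift in `j`. -/
def TjZ (k : ℤ) (φ : QG) : QG := fun i j => φ i (j + k)

/-- The inverse shift `T_i⁻¹`. -/
def TiInv (φ : QG) : QG := fun i j => φ (i - 1) j

/-- The inverse shift `T_j⁻¹`. -/
def TjInv (φ : QG) : QG := fun i j => φ i (j - 1)

/-- A function that is nowhere zero. -/
def NowhereZero (φ : QG) : Prop := ∀ i j, φ i j ≠ 0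

/-- The linearization operator `L = T_i∘T_j − a·T_i − b·T_j − c·`. -/
def L (a b c : QG) (φ : QG) : QG := Ti (Tj φ) - a * Ti φ - b * Tj φ - c * φ

/-- The pair `(b_k, H_k)` of the Laplace j-transformations:
`b_0 = a`, `H_0 = c + b·T_i⁻¹(a)`,
`b_{k+1} = T_i⁻¹(b_k)·T_j(H_k)/H_k`,
`H_{k+1} = T_j(H_k) − T_j^k(b)·b_{k+1} + T_j^{k+1}(b)·T_i⁻¹(b_{k+1})`. -/
def bH (a b c : QG) : ℕ → QG × QG
  | 0 => (a, c + b * TiInv a)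
  | k + 1 =>
      let bk := TiInv (bH a b c k).1 * Tj (bH a b c k).2 / (bH a b c k).2
      (bk, Tj (bH a b c k).2 - TjZ (k : ℤ) b * bk + TjZ ((k : ℤ) + 1) b * TiInv bk)

/-- The function `b_k`. -/
def bj (a b c : QG) (k : ℕ) : QG := (bH a b c k).1

/-- The Laplace j-invariant `H_k`. -/
def Hj (a b c : QG) (k : ℕ) : QG := (bH a b c k).2

/-- The operator `L_k`: `L_0 = L` and
`L_k = (T_i − T_j^k(b)·)∘(T_j − T_i⁻¹(b_k)·) − H_k·` for `k ≥ 1`. -/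
def Lk (a b c : QG) : ℕ → QG → QG
  | 0, φ => L a b c φ
  | k + 1, φ =>
      Ti (Tj φ - TiInv (bj a b c (k + 1)) * φ)
        - TjZ ((k : ℤ) + 1) b * (Tj φ - TiInv (bj a b c (k + 1)) * φ)
        - Hj a b c (k + 1) * φ

/-- `Bo (k+1)` is the operator `B_k = (T_j − T_i⁻¹(b_k)·)∘B_{k-1}`; `Bo 0 = id` is `B_{-1}`. -/
def Bo (a b c : QG) : ℕ → QG → QG
  | 0, φ => φ
  | k + 1, φ => Tj (Bo a b c k φ) - TiInv (bj a b c k) * Bo a b c k φ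

/-- `Bbar k` is the operator `B̄_k`: `B̄_0 = id`, `B̄_k = (T_j − b_k·)∘B̄_{k-1}`. -/
def Bbar (a b c : QG) : ℕ → QG → QG
  | 0, φ => φ
  | k + 1, φ => Tj (Bbar a b c k φ) - bj a b c (k + 1) * Bbar a b c k φ

/-- `Rchain p` is the composition
`((1/H_0)·)∘(T_i − b·)∘((1/H_1)·)∘(T_i − T_j(b)·)∘···∘((1/H_{p-1})·)∘(T_i − T_j^{p-1}(b)·)`
(the identity for `p = 0`). -/
def Rchain (a b c : QG) : ℕ → QG → QG
  | 0, φ => φ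
  | k + 1, φ => Rchain a b c k ((1 / Hj a b c k) * (Ti φ - TjZ (k : ℤ) b * φ))

end
noncomputable section
variable (a b c : QG)

lemma bj_succ (k : ℕ) : bj a b c (k+1) = TiInv (bj a b c k) * Tj (Hj a b c k) / Hj a b c k := rfl
lemma Hj_succ (k : ℕ) : Hj a b c (k+1) = Tj (Hj a b c k) - TjZ (k : ℤ) b * bj a b c (k+1)
    + TjZ ((k : ℤ) + 1) b * TiInv (bj a b c (k+1)) := rfl

lemma Lk_eq (k : ℕ) (φ : QG) :
    Lk a b c k φ =
      Ti (Tj φ - TiInv (bj a b c k) * φ) - TjZ (k : ℤ) b * (Tj φ - TiInv (bj a b c k) * φ)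
        - Hj a b c k * φ := by
  cases k with
  | zero =>
    funext i j
    simp only [Lk, L, Ti, Tj, TiInv, TjZ, bj, Hj, bH, Pi.mul_apply, Pi.sub_apply, Pi.add_apply]
    push_cast
    ring_nf
  | succ k => rfl

lemma cascade (k : ℕ) (hk : NowhereZero (Hj a b c k)) (ψ : QG) :
    Lk a b c k ((1 / Hj a b c k) * (Ti ψ - TjZ (k : ℤ) b * ψ)) =
      Ti ((1 / Tj (Hj a b c k)) * Lk a b c (k+1) ψ)
        - TjZ (k : ℤ) b * ((1 / Tj (Hj a b c k)) * Lk a b c (k+1) ψ) := by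
  rw [Lk_eq a b c k, Lk_eq a b c (k+1), Hj_succ, bj_succ]
  funext i j
  have h1 : Hj a b c k i j ≠ 0 := hk i j
  have h2 : Hj a b c k (i+1) j ≠ 0 := hk _ _
  have h3 : Hj a b c k i (j+1) ≠ 0 := hk _ _
  have h4 : Hj a b c k (i+1) (j+1) ≠ 0 := hk _ _
  simp only [Ti, Tj, TiInv, TjZ, Pi.mul_apply, Pi.sub_apply, Pi.add_apply, Pi.div_apply, Pi.one_apply]
  push_cast
  simp only [show ∀ y : ℤ, y + 1 + (k:ℤ) = y + ((k:ℤ)+1) from fun y => by ring,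
    add_sub_cancel_right, sub_add_cancel]
  field_simp
  ring

lemma descent : ∀ (k : ℕ), (∀ m, m < k → NowhereZero (Hj a b c m)) →
    ∀ ψ : QG, Lk a b c k ψ = 0 → L a b c (Rchain a b c k ψ) = 0
  | 0, _, ψ, h => h
  | k+1, hH, ψ, h => by
      show L a b c (Rchain a b c k ((1 / Hj a b c k) * (Ti ψ - TjZ (k : ℤ) b * ψ))) = 0
      apply descent k (fun m hm => hH m (hm.trans (Nat.lt_succ_self k)))
      rw [cascade a b c k (hH k (Nat.lt_succ_self k)) ψ, h]
      funext i j
      simp [Ti, Tj, TjZ]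

/-- cross-multiplied telescoping identity for μ -/
lemma mu_key (ϑ : QG) (ha : NowhereZero a) (hϑ0 : NowhereZero ϑ) (hϑ : Tj ϑ = ϑ / a) :
    ∀ (q : ℕ), (∀ m, m < q → NowhereZero (Hj a b c m)) → ∀ (i j : ℤ),
      (∏ s ∈ Finset.range q, Hj a b c (q - 1 - s) (i + (-((s : ℤ) + 1))) (j+1)) * ϑ (i + (-((q:ℤ)+1))) j
      = bj a b c q (i - 1) j *
        ((∏ s ∈ Finset.range q, Hj a b c (q - 1 - s) (i + (-((s : ℤ) + 1))) j) * ϑ (i + (-((q:ℤ)+1))) (j+1)) := by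
  intro q
  induction q with
  | zero =>
      intro _ i j
      have h := congrFun (congrFun hϑ (i - 1)) j
      simp only [Tj, Pi.div_apply] at h
      have ha1 : a (i - 1) j ≠ 0 := ha _ _
      have hϑ1 : ϑ (i - 1) j ≠ 0 := hϑ0 _ _
      simp only [Finset.range_zero, Finset.prod_empty, one_mul, bj, bH]
      push_cast
      rw [show i + (-1 : ℤ) = i - 1 by ring, h]
      field_simp
  | succ q ih =>
      intro hH i j
      have hpeel : ∀ (y : ℤ),
          (∏ s ∈ Finset.range (q+1), Hj a b c (q + 1 - 1 - s) (i + (-((s : ℤ) + 1))) y)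
            = Hj a b c q (i - 1) y *
              (∏ s ∈ Finset.range q, Hj a b c (q - 1 - s) ((i-1) + (-((s : ℤ) + 1))) y) := by
        intro y
        have key : ∀ (n m : ℕ) (x z : ℤ), n = m → x = z →
            Hj a b c n x y = Hj a b c m z y := by
          intro n m x z h1 h2; rw [h1, h2]
        rw [Finset.prod_range_succ', mul_comm]
        congr 1
        · apply Finset.prod_congr rfl
          intro x _
          refine key _ _ _ _ ?_ ?_
          · omega
          · push_cast; ring
      rw [hpeel, hpeel]
      push_cast
      rw [show i + -((q:ℤ) + 1 + 1) = (i-1) + -((q:ℤ)+1) by ring]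
      have hq : ∀ m, m < q → NowhereZero (Hj a b c m) :=
        fun m hm => hH m (hm.trans (Nat.lt_succ_self q))
      have IH := ih hq (i - 1) j
      have hb : bj a b c (q+1) (i-1) j
          = bj a b c q (i-1-1) j * Hj a b c q (i-1) (j+1) / Hj a b c q (i-1) j := by
        rw [bj_succ]
        simp [TiInv, Tj]
      have hHq : Hj a b c q (i-1) j ≠ 0 := hH q (Nat.lt_succ_self q) _ _
      have hb2 : bj a b c (q+1) (i-1) j * Hj a b c q (i-1) j
          = bj a b c q (i-1-1) j * Hj a b c q (i-1) (j+1) := by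
        rw [hb, div_mul_cancel₀ _ hHq]
      calc (Hj a b c q (i-1) (j+1) * ∏ s ∈ Finset.range q,
              Hj a b c (q - 1 - s) ((i-1) + (-((s : ℤ) + 1))) (j+1)) * ϑ ((i-1) + -((q:ℤ)+1)) j
          = Hj a b c q (i-1) (j+1) * ((∏ s ∈ Finset.range q,
              Hj a b c (q - 1 - s) ((i-1) + (-((s : ℤ) + 1))) (j+1)) * ϑ ((i-1) + -((q:ℤ)+1)) j) := by
            ring
        _ = Hj a b c q (i-1) (j+1) * (bj a b c q (i-1-1) j * ((∏ s ∈ Finset.range q,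
              Hj a b c (q - 1 - s) ((i-1) + (-((s : ℤ) + 1))) j) * ϑ ((i-1) + -((q:ℤ)+1)) (j+1))) := by
            rw [IH]
        _ = (bj a b c q (i-1-1) j * Hj a b c q (i-1) (j+1)) * ((∏ s ∈ Finset.range q,
              Hj a b c (q - 1 - s) ((i-1) + (-((s : ℤ) + 1))) j) * ϑ ((i-1) + -((q:ℤ)+1)) (j+1)) := by
            ring
        _ = (bj a b c (q+1) (i-1) j * Hj a b c q (i-1) j) * ((∏ s ∈ Finset.range q,
              Hj a b c (q - 1 - s) ((i-1) + (-((s : ℤ) + 1))) j) * ϑ ((i-1) + -((q:ℤ)+1)) (j+1)) := by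
            rw [hb2]
        _ = bj a b c (q+1) (i-1) j * ((Hj a b c q (i-1) j * ∏ s ∈ Finset.range q,
              Hj a b c (q - 1 - s) ((i-1) + (-((s : ℤ) + 1))) j) * ϑ ((i-1) + -((q:ℤ)+1)) (j+1)) := by
            ring

end

/-- Let `p ≥ 0`.  Suppose `H_0, …, H_{p-1}` are nowhere zero, `H_p ≡ 0`,
`a` is nowhere zero, and `ϑ` is nowhere zero with `T_j(ϑ) = ϑ/a`.  Let
`R = ((1/H_0)·)∘(T_i − b·)∘((1/H_1)·)∘(T_i − T_j(b)·)∘···∘((1/H_{p-1})·)∘(T_i − T_j^{p-1}(b)·)∘(μ·)`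
with `μ = T_i⁻¹(H_{p-1})·T_i⁻²(H_{p-2})···T_i^{-p}(H_0)/T_i^{-(p+1)}(ϑ)` (so `R` is
multiplication by `1/T_i⁻¹(ϑ)` for `p = 0`).  Then `R` maps `ker (T_j − 1)` into the
space of symmetries `ker L`, i.e. `R` is an i-symmetry driver. -/
theorem statement16 (a b c ϑ : QG) (p : ℕ)
    (hH : ∀ m, m < p → NowhereZero (Hj a b c m)) (hHp : Hj a b c p = 0)
    (ha : NowhereZero a) (hϑ0 : NowhereZero ϑ) (hϑ : Tj ϑ = ϑ / a) :
    ∀ f : QG, Tj f = f →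
      L a b c (Rchain a b c p
        ((∏ s ∈ Finset.range p, TiZ (-((s : ℤ) + 1)) (Hj a b c (p - 1 - s)))
            / TiZ (-((p : ℤ) + 1)) ϑ * f)) = 0 := by
  intro f hf
  apply descent a b c p hH
  rw [Lk_eq]
  have hN : Tj ((∏ s ∈ Finset.range p, TiZ (-((s : ℤ) + 1)) (Hj a b c (p - 1 - s)))
            / TiZ (-((p : ℤ) + 1)) ϑ * f)
      - TiInv (bj a b c p) * ((∏ s ∈ Finset.range p, TiZ (-((s : ℤ) + 1)) (Hj a b c (p - 1 - s)))
            / TiZ (-((p : ℤ) + 1)) ϑ * f) = 0 := by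
    funext i j
    have hff : f i (j + 1) = f i j := congrFun (congrFun hf i) j
    have hk := mu_key a b c ϑ ha hϑ0 hϑ p hH i j
    have h1 : ϑ (i + -((p:ℤ)+1)) j ≠ 0 := hϑ0 _ _
    have h2 : ϑ (i + -((p:ℤ)+1)) (j+1) ≠ 0 := hϑ0 _ _
    simp only [Tj, TiInv, TiZ, Pi.mul_apply, Pi.div_apply, Pi.sub_apply, Pi.zero_apply,
      Finset.prod_apply]
    rw [hff]
    rw [div_mul_eq_mul_div, div_mul_eq_mul_div,
      show ∀ x y z : ℝ, x * (y / z) = x * y / z from fun x y z => (mul_div_assoc x y z).symm,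
      div_sub_div _ _ h2 h1, div_eq_zero_iff]
    left
    linear_combination f i j * hk
  rw [hN, hHp]
  funext i j
  simp [Ti, TjZ]


end QG
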